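/- arXiv:2503.03055 — 3 statements merged into one kernel-verified Lean document; each statement's English description precedes it below -/
import Mathlib

section
/- For every integer n ≥ 2, the Wiener index of the Mycielskian of the path P_n is W(μ(P_n)) = 6n² − n + 11. -/
open SimpleGraph Polynomial Finset

/-- The Mycielskian `μ(G)` of a simple graph `G`. Vertices `Sum.inl v` are the original
vertices `v_i`, vertices `Sum.inr (Sum.inl v)` are the shadow vertices `u_i`, and
`Sum.inr (Sum.inr ())` is the apex vertex `w`.  Edges: the edges of `G`, the edges `w u_i`,
and the edges `u_i v_j`, `u_j v_i` for every edge `v_i v_j` of `G`. -/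
def mycielskian {V : Type*} (G : SimpleGraph V) : SimpleGraph (V ⊕ V ⊕ Unit) :=
  SimpleGraph.fromRel (fun a b =>
    match a, b with
    | Sum.inl a, Sum.inl b => G.Adj a b
    | Sum.inl a, Sum.inr (Sum.inl b) => G.Adj a b
    | Sum.inr (Sum.inl _), Sum.inr (Sum.inr _) => True
    | _, _ => False)

/-- `distCount G k` is `d(G,k)`, the number of unordered pairs of distinct vertices of `G`
whose graph distance is exactly `k`. -/
noncomputable def distCount {V : Type*} (G : SimpleGraph V) (k : ℕ) : ℕ :=
  Nat.card {e : Sym2 V // ¬ e.IsDiag ∧ Sym2.lift ⟨G.dist, fun _ _ => G.dist_comm⟩ e = k}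

/-- The Hosoya polynomial `H(G,x) = Σ_{k=1}^{D(G)} d(G,k) x^k` (with rational coefficients). -/
noncomputable def hosoya {V : Type*} (G : SimpleGraph V) : Polynomial ℚ :=
  ∑ k ∈ Finset.Icc 1 G.diam, (distCount G k : ℚ) • Polynomial.X ^ k

/-- The Wiener index `W(G)`: the sum of distances over all unordered pairs of distinct
vertices (the diagonal contributes `0`, so we may sum over ordered pairs and halve). -/
noncomputable def wiener {V : Type*} (G : SimpleGraph V) [Fintype V] : ℚ :=
  (∑ u : V, ∑ v : V, (G.dist u v : ℚ)) / 2

/-- The Hyper-Wiener index `WW(G) = (1/2) Σ_{{u,v}} (d(u,v)² + d(u,v))`. -/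
noncomputable def hyperWiener {V : Type*} (G : SimpleGraph V) [Fintype V] : ℚ :=
  (∑ u : V, ∑ v : V, ((G.dist u v : ℚ) ^ 2 + (G.dist u v : ℚ))) / 4

/-- The TSZ index `TSZ(G) = (1/6) Σ_{{u,v}} d³ + (1/2) Σ_{{u,v}} d² + (1/3) Σ_{{u,v}} d`. -/
noncomputable def tszIndex {V : Type*} (G : SimpleGraph V) [Fintype V] : ℚ :=
  (∑ u : V, ∑ v : V, (G.dist u v : ℚ) ^ 3) / 12
    + (∑ u : V, ∑ v : V, (G.dist u v : ℚ) ^ 2) / 4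
    + (∑ u : V, ∑ v : V, (G.dist u v : ℚ)) / 6

/-- The Harary index `Har(G) = Σ_{{u,v}} 1/d(u,v)` (diagonal terms are `0⁻¹ = 0`). -/
noncomputable def harary {V : Type*} (G : SimpleGraph V) [Fintype V] : ℚ :=
  (∑ u : V, ∑ v : V, ((G.dist u v : ℚ))⁻¹) / 2

/-- The closeness `C(G) = Σ_u Σ_{v ≠ u} 2^{-d(u,v)}` over ordered pairs of distinct vertices. -/
noncomputable def closeness {V : Type*} (G : SimpleGraph V) [Fintype V] : ℚ :=
  letI := Classical.decEq V
  ∑ u : V, ∑ v : V, if v = u then 0 else ((1 : ℚ) / 2) ^ (G.dist u v)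

/-- `σ_{uv}`: the number of shortest paths (walks of length `dist u v`) from `u` to `v`. -/
noncomputable def numSP {V : Type*} (G : SimpleGraph V) (u v : V) : ℕ :=
  Nat.card {p : G.Walk u v // p.length = G.dist u v}

/-- `σ_{uv}(w)`: the number of shortest paths from `u` to `v` passing through `w`. -/
noncomputable def numSPthrough {V : Type*} (G : SimpleGraph V) (w u v : V) : ℕ :=
  Nat.card {p : G.Walk u v // p.length = G.dist u v ∧ w ∈ p.support}

/-- The betweenness centrality `B_w = Σ_{{u,v}, u ≠ w ≠ v} σ_{uv}(w)/σ_{uv}` of a vertex `w`,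
summed over unordered pairs of distinct vertices (ordered pairs, halved). -/
noncomputable def btwVertex {V : Type*} (G : SimpleGraph V) [Fintype V] (w : V) : ℚ :=
  letI := Classical.decEq V
  (∑ u : V, ∑ v : V,
    if u ≠ v ∧ u ≠ w ∧ v ≠ w then (numSPthrough G w u v : ℚ) / (numSP G u v) else 0) / 2

/-- The betweenness centrality of a graph: `B⁻(G) = (1/N) Σ_w B_w`. -/
noncomputable def btw {V : Type*} (G : SimpleGraph V) [Fintype V] : ℚ :=
  (∑ w : V, btwVertex G w) / (Fintype.card V)

/-- The star graph `S_n`: center `0` joined to the `n` leaves `1, …, n`. -/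
def starGraph (n : ℕ) : SimpleGraph (Fin (n + 1)) :=
  SimpleGraph.fromRel (fun a _ => a = 0)

/-- The join `G₁ ⊕ G₂` of two graphs on disjoint vertex sets: all edges of `G₁`, all edges
of `G₂`, and all edges between `V(G₁)` and `V(G₂)`. -/
def joinGraph {V₁ V₂ : Type*} (G₁ : SimpleGraph V₁) (G₂ : SimpleGraph V₂) :
    SimpleGraph (V₁ ⊕ V₂) :=
  SimpleGraph.fromRel (fun a b =>
    match a, b with
    | Sum.inl a, Sum.inl b => G₁.Adj a b
    | Sum.inr a, Sum.inr b => G₂.Adj a b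
    | Sum.inl _, Sum.inr _ => True
    | _, _ => False)

variable {n : ℕ}

abbrev MV (n : ℕ) := Fin (n+1) ⊕ Fin (n+1) ⊕ Unit
abbrev MG (n : ℕ) := mycielskian (SimpleGraph.pathGraph (n+1))

/-- closed form for distances in the Mycielskian of the path -/
def D (n : ℕ) : MV n → MV n → ℕ
| Sum.inl i, Sum.inl j => min (Nat.dist i.val j.val) 4
| Sum.inl i, Sum.inr (Sum.inl j) => if i = j then 2 else min (Nat.dist i.val j.val) 3
| Sum.inr (Sum.inl i), Sum.inl j => if i = j then 2 else min (Nat.dist i.val j.val) 3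
| Sum.inl _, Sum.inr (Sum.inr _) => 2
| Sum.inr (Sum.inr _), Sum.inl _ => 2
| Sum.inr (Sum.inl i), Sum.inr (Sum.inl j) => if i = j then 0 else 2
| Sum.inr (Sum.inl _), Sum.inr (Sum.inr _) => 1
| Sum.inr (Sum.inr _), Sum.inr (Sum.inl _) => 1
| Sum.inr (Sum.inr _), Sum.inr (Sum.inr _) => 0

lemma D_self (x : MV n) : D n x x = 0 := by
  rcases x with i | i | u <;> simp [D, Nat.dist]

lemma madj_vv {i j : Fin (n+1)} :
    (MG n).Adj (Sum.inl i) (Sum.inl j) ↔ (SimpleGraph.pathGraph (n+1)).Adj i j := by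
  constructor
  · rintro ⟨-, h | h⟩
    · exact h
    · exact h.symm
  · intro h
    exact ⟨by simp [h.ne], Or.inl h⟩

lemma madj_vu {i j : Fin (n+1)} :
    (MG n).Adj (Sum.inl i) (Sum.inr (Sum.inl j)) ↔ (SimpleGraph.pathGraph (n+1)).Adj i j := by
  constructor
  · rintro ⟨-, h | h⟩
    · exact h
    · exact h.elim
  · intro h
    exact ⟨by simp, Or.inl h⟩

lemma madj_uw {i : Fin (n+1)} :
    (MG n).Adj (Sum.inr (Sum.inl i)) (Sum.inr (Sum.inr ())) :=
  ⟨by simp, Or.inl trivial⟩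

/-- `D x ·` is 1-Lipschitz along edges. -/
lemma D_adj (x : MV n) {a b : MV n} (h : (MG n).Adj a b) : D n x b ≤ D n x a + 1 := by
  rcases a with i | i | u <;> rcases b with j | j | v <;>
    rcases x with k | k | w <;>
    simp_all [mycielskian, SimpleGraph.fromRel_adj, pathGraph_adj, D, Nat.dist, Fin.ext_iff] <;>
    (try split_ifs) <;>
    omega

lemma D_le_length (x : MV n) : ∀ {a b : MV n} (p : (MG n).Walk a b),
    D n x b ≤ D n x a + p.length := by
  intro a b p
  induction p with
  | nil => simp
  | cons h q ih =>
    have := D_adj x h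
    simp only [SimpleGraph.Walk.length_cons]
    omega

lemma exists_nbr (hn : 1 ≤ n) (i : Fin (n+1)) :
    ∃ j : Fin (n+1), (SimpleGraph.pathGraph (n+1)).Adj i j := by
  rcases Nat.lt_or_ge i.val n with h | h
  · exact ⟨⟨i.val + 1, by omega⟩, pathGraph_adj.mpr (Or.inl rfl)⟩
  · have hi : i.val = n := by omega
    refine ⟨⟨i.val - 1, by omega⟩, pathGraph_adj.mpr (Or.inr ?_)⟩
    simp; omega

lemma reach_w (hn : 1 ≤ n) (x : MV n) :
    (MG n).Reachable x (Sum.inr (Sum.inr ())) := by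
  rcases x with i | i | u
  · obtain ⟨j, hj⟩ := exists_nbr hn i
    exact ((madj_vu.mpr hj).reachable).trans (madj_uw (i := j)).reachable
  · exact (madj_uw (i := i)).reachable
  · rfl

lemma conn (hn : 1 ≤ n) : (MG n).Connected := by
  rw [SimpleGraph.connected_iff]
  refine ⟨fun x y => (reach_w hn x).trans (reach_w hn y).symm, ⟨Sum.inr (Sum.inr ())⟩⟩

lemma ub_vv_aux (hn : 1 ≤ n) : ∀ (d : ℕ) (i j : Fin (n+1)), i.val + d = j.val →
    (MG n).dist (Sum.inl i) (Sum.inl j) ≤ d := by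
  intro d
  induction d with
  | zero =>
    intro i j h
    have : i = j := Fin.ext (by omega)
    subst this; simp
  | succ d ih =>
    intro i j h
    have hj : j.val < n + 1 := j.isLt
    set j' : Fin (n+1) := ⟨i.val + d, by omega⟩ with hj'
    have h1 : (MG n).dist (Sum.inl i) (Sum.inl j') ≤ d := ih i j' rfl
    have hadj : (MG n).Adj (Sum.inl j') (Sum.inl j) :=
      madj_vv.mpr (pathGraph_adj.mpr (Or.inl (by simp [hj']; omega)))
    have h2 := SimpleGraph.dist_le (SimpleGraph.Walk.cons hadj SimpleGraph.Walk.nil)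
    have h3 := (conn hn).dist_triangle (u := Sum.inl i) (v := Sum.inl j') (w := Sum.inl j)
    simp at h2
    omega

lemma ub_vv (hn : 1 ≤ n) (i j : Fin (n+1)) :
    (MG n).dist (Sum.inl i) (Sum.inl j) ≤ Nat.dist i.val j.val := by
  rcases le_total i.val j.val with h | h
  · exact ub_vv_aux hn _ i j (by simp [Nat.dist]; omega)
  · rw [SimpleGraph.dist_comm]
    exact ub_vv_aux hn _ j i (by simp [Nat.dist]; omega)

lemma ub_uw (i : Fin (n+1)) :
    (MG n).dist (Sum.inr (Sum.inl i)) (Sum.inr (Sum.inr ())) ≤ 1 := by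
  have := SimpleGraph.dist_le (SimpleGraph.Walk.cons (madj_uw (i := i)) SimpleGraph.Walk.nil)
  simpa using this

lemma ub_vw (hn : 1 ≤ n) (i : Fin (n+1)) :
    (MG n).dist (Sum.inl i) (Sum.inr (Sum.inr ())) ≤ 2 := by
  obtain ⟨j, hj⟩ := exists_nbr hn i
  have := SimpleGraph.dist_le (SimpleGraph.Walk.cons (madj_vu.mpr hj)
    (SimpleGraph.Walk.cons (madj_uw (i := j)) SimpleGraph.Walk.nil))
  simpa using this

lemma ub_uu (hn : 1 ≤ n) (i j : Fin (n+1)) :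
    (MG n).dist (Sum.inr (Sum.inl i)) (Sum.inr (Sum.inl j)) ≤ 2 := by
  have h1 := ub_uw (n := n) i
  have h2 := ub_uw (n := n) j
  have h3 := (conn hn).dist_triangle (u := Sum.inr (Sum.inl i)) (v := Sum.inr (Sum.inr ()))
    (w := Sum.inr (Sum.inl j))
  rw [SimpleGraph.dist_comm (u := Sum.inr (Sum.inr ()))] at h3
  omega

lemma ub_vu3 (hn : 1 ≤ n) (i j : Fin (n+1)) :
    (MG n).dist (Sum.inl i) (Sum.inr (Sum.inl j)) ≤ 3 := by
  have h1 := ub_vw hn i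
  have h2 := ub_uw (n := n) j
  have h3 := (conn hn).dist_triangle (u := Sum.inl i) (v := Sum.inr (Sum.inr ()))
    (w := Sum.inr (Sum.inl j))
  rw [SimpleGraph.dist_comm (u := Sum.inr (Sum.inr ()))] at h3
  omega

lemma ub_vv4 (hn : 1 ≤ n) (i j : Fin (n+1)) :
    (MG n).dist (Sum.inl i) (Sum.inl j) ≤ 4 := by
  have h1 := ub_vw hn i
  have h2 := ub_vw hn j
  have h3 := (conn hn).dist_triangle (u := Sum.inl i) (v := Sum.inr (Sum.inr ()))
    (w := Sum.inl j)
  rw [SimpleGraph.dist_comm (u := Sum.inr (Sum.inr ()))] at h3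
  omega

lemma ub_vu_near (hn : 1 ≤ n) (i j : Fin (n+1)) (hij : i ≠ j) :
    (MG n).dist (Sum.inl i) (Sum.inr (Sum.inl j)) ≤ Nat.dist i.val j.val := by
  have hne : i.val ≠ j.val := fun h => hij (Fin.ext h)
  rcases Nat.lt_or_ge i.val j.val with h | h
  · set j' : Fin (n+1) := ⟨j.val - 1, by omega⟩ with hj'
    have h1 : (MG n).dist (Sum.inl i) (Sum.inl j') ≤ Nat.dist i.val j.val - 1 := by
      have := ub_vv hn (n := n) i j'
      have : Nat.dist i.val j'.val = Nat.dist i.val j.val - 1 := by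
        simp [Nat.dist, hj']; omega
      omega
    have hadj : (MG n).Adj (Sum.inl j') (Sum.inr (Sum.inl j)) :=
      madj_vu.mpr (pathGraph_adj.mpr (Or.inl (by simp [hj']; omega)))
    have h2 := SimpleGraph.dist_le (SimpleGraph.Walk.cons hadj SimpleGraph.Walk.nil)
    have h3 := (conn hn).dist_triangle (u := Sum.inl i) (v := Sum.inl j')
      (w := Sum.inr (Sum.inl j))
    simp at h2
    have : 1 ≤ Nat.dist i.val j.val := by simp [Nat.dist]; omega
    omega
  · set j' : Fin (n+1) := ⟨j.val + 1, by omega⟩ with hj'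
    have h1 : (MG n).dist (Sum.inl i) (Sum.inl j') ≤ Nat.dist i.val j.val - 1 := by
      have := ub_vv hn (n := n) i j'
      have : Nat.dist i.val j'.val = Nat.dist i.val j.val - 1 := by
        simp [Nat.dist, hj']; omega
      omega
    have hadj : (MG n).Adj (Sum.inl j') (Sum.inr (Sum.inl j)) :=
      madj_vu.mpr (pathGraph_adj.mpr (Or.inr (by simp [hj'])))
    have h2 := SimpleGraph.dist_le (SimpleGraph.Walk.cons hadj SimpleGraph.Walk.nil)
    have h3 := (conn hn).dist_triangle (u := Sum.inl i) (v := Sum.inl j')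
      (w := Sum.inr (Sum.inl j))
    simp at h2
    have : 1 ≤ Nat.dist i.val j.val := by simp [Nat.dist]; omega
    omega

lemma ub_vu_diag (hn : 1 ≤ n) (i : Fin (n+1)) :
    (MG n).dist (Sum.inl i) (Sum.inr (Sum.inl i)) ≤ 2 := by
  obtain ⟨j, hj⟩ := exists_nbr hn i
  have := SimpleGraph.dist_le (SimpleGraph.Walk.cons (madj_vv.mpr hj)
    (SimpleGraph.Walk.cons (madj_vu.mpr hj.symm) SimpleGraph.Walk.nil))
  simpa using this

lemma dist_eq (hn : 1 ≤ n) (x y : MV n) : (MG n).dist x y = D n x y := by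
  refine le_antisymm ?_ ?_
  · rcases x with i | i | u <;> rcases y with j | j | v
    · exact le_min (ub_vv hn i j) (ub_vv4 hn i j)
    · by_cases hij : i = j
      · subst hij; simp only [D, if_pos rfl]; exact ub_vu_diag hn i
      · simp only [D, if_neg hij]
        exact le_min (ub_vu_near hn i j hij) (ub_vu3 hn i j)
    · exact ub_vw hn i
    · rw [SimpleGraph.dist_comm]
      by_cases hij : i = j
      · subst hij
        simpa [D] using ub_vu_diag hn i
      · simp only [D, if_neg hij]
        have h1 := ub_vu_near hn j i (fun h => hij h.symm)
        have h2 := ub_vu3 hn j i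
        rw [Nat.dist_comm]
        exact le_min h1 h2
    · by_cases hij : i = j
      · subst hij; simp [D]
      · simp only [D, if_neg hij]; exact ub_uu hn i j
    · exact ub_uw i
    · rw [SimpleGraph.dist_comm]
      exact ub_vw hn j
    · rw [SimpleGraph.dist_comm]
      exact ub_uw j
    · simp [D]
  · obtain ⟨p, hp⟩ := ((conn hn).exists_walk_length_eq_dist x y)
    have := D_le_length x p
    rw [D_self x] at this
    omega


def S (k m : ℕ) : ℕ := ∑ i ∈ range m, ∑ j ∈ range m, min (Nat.dist i j) k

lemma row (k m : ℕ) : ∑ j ∈ range m, min (Nat.dist m j) k = ∑ t ∈ range m, min (t+1) k := by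
  rw [← Finset.sum_range_reflect]
  refine Finset.sum_congr rfl fun t ht => ?_
  simp only [Finset.mem_range] at ht
  congr 1
  simp [Nat.dist]
  omega

lemma rowsum3 : ∀ m, 2 ≤ m → (∑ t ∈ range m, min (t+1) 3) + 3 = 3*m := by
  intro m hm
  induction m, hm using Nat.le_induction with
  | base => decide
  | succ m hm ih =>
    rw [Finset.sum_range_succ]
    have : min (m+1) 3 = 3 := by omega
    omega

lemma rowsum4 : ∀ m, 3 ≤ m → (∑ t ∈ range m, min (t+1) 4) + 6 = 4*m := by
  intro m hm
  induction m, hm using Nat.le_induction with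
  | base => decide
  | succ m hm ih =>
    rw [Finset.sum_range_succ]
    have : min (m+1) 4 = 4 := by omega
    omega

lemma S_succ (k m : ℕ) : S k (m+1) = S k m + 2 * ∑ t ∈ range m, min (t+1) k := by
  unfold S
  rw [Finset.sum_range_succ]
  have h1 : ∀ i ∈ range m, ∑ j ∈ range (m+1), min (Nat.dist i j) k
      = (∑ j ∈ range m, min (Nat.dist i j) k) + min (Nat.dist i m) k :=
    fun i _ => Finset.sum_range_succ _ m
  rw [Finset.sum_congr rfl h1, Finset.sum_add_distrib, Finset.sum_range_succ]
  have h2 : min (Nat.dist m m) k = 0 := by simp [Nat.dist]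
  have h3 : ∑ i ∈ range m, min (Nat.dist i m) k = ∑ t ∈ range m, min (t+1) k := by
    rw [← row k m]
    exact Finset.sum_congr rfl fun i _ => by rw [Nat.dist_comm]
  rw [h2, h3, row]
  ring

lemma S3_closed : ∀ n, 2 ≤ n → S 3 (n+1) + 3*n = 3*n^2 + 2 := by
  intro n hn2
  induction n, hn2 using Nat.le_induction with
  | base => decide
  | succ n hn ih =>
    rw [S_succ]
    have h1 := rowsum3 (n+1) (by omega)
    have e : 3*(n+1)^2 + 2 = (3*n^2+2) + (6*n+3) := by ring
    rw [e]
    omega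
  
lemma S4_closed : ∀ n, 2 ≤ n → S 4 (n+1) + 8*n = 4*n^2 + 8 := by
  intro n hn2
  induction n, hn2 using Nat.le_induction with
  | base => decide
  | succ n hn ih =>
    rcases Nat.lt_or_ge n 3 with h | h
    · interval_cases n
      · decide
    · rw [S_succ]
      have h1 := rowsum4 (n+1) (by omega)
      have e : 4*(n+1)^2 + 8 = (4*n^2+8) + (8*n+4) := by ring
      rw [e]
      omega

lemma sumUU (N : ℕ) :
    (∑ i ∈ range N, ∑ j ∈ range N, if i = j then 0 else 2) + 2*N = 2*N*N := by
  have key : ∀ i ∈ range N, (∑ j ∈ range N, if i = j then (2:ℕ) else 0) = 2 := by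
    intro i hi
    rw [Finset.sum_ite_eq]
    simp [hi]
  have h2 : (∑ i ∈ range N, ∑ j ∈ range N, if i = j then (0:ℕ) else 2)
      + (∑ i ∈ range N, ∑ j ∈ range N, if i = j then (2:ℕ) else 0)
      = 2*N*N := by
    rw [← Finset.sum_add_distrib]
    have : ∀ i ∈ range N, ((∑ j ∈ range N, if i = j then (0:ℕ) else 2)
        + ∑ j ∈ range N, if i = j then (2:ℕ) else 0) = 2*N := by
      intro i hi
      rw [← Finset.sum_add_distrib]
      have : ∀ j ∈ range N, ((if i = j then (0:ℕ) else 2) + if i = j then (2:ℕ) else 0) = 2 := by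
        intro j _; split_ifs <;> rfl
      rw [Finset.sum_congr rfl this, Finset.sum_const, Finset.card_range]
      ring
    rw [Finset.sum_congr rfl this, Finset.sum_const, Finset.card_range]
    ring
  rw [Finset.sum_congr rfl key, Finset.sum_const, Finset.card_range, smul_eq_mul] at h2
  omega

lemma sumVU (N : ℕ) :
    (∑ i ∈ range N, ∑ j ∈ range N, if i = j then 2 else min (Nat.dist i j) 3)
      = S 3 N + 2*N := by
  have : ∀ i ∈ range N, ∀ j ∈ range N,
      (if i = j then 2 else min (Nat.dist i j) 3)
        = min (Nat.dist i j) 3 + (if i = j then 2 else 0) := by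
    intro i _ j _
    split_ifs with h
    · subst h; simp [Nat.dist]
    · simp
  calc (∑ i ∈ range N, ∑ j ∈ range N, if i = j then 2 else min (Nat.dist i j) 3)
      = ∑ i ∈ range N, ∑ j ∈ range N,
          (min (Nat.dist i j) 3 + if i = j then 2 else 0) := by
        refine Finset.sum_congr rfl fun i hi => Finset.sum_congr rfl fun j hj => this i hi j hj
    _ = S 3 N + 2*N := by
        simp only [Finset.sum_add_distrib]
        rw [← Finset.sum_add_distrib]
        unfold S
        rw [Finset.sum_add_distrib]
        congr 1
        have key : ∀ i ∈ range N, (∑ j ∈ range N, if i = j then (2:ℕ) else 0) = 2 := by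
          intro i hi
          rw [Finset.sum_ite_eq]
          simp [hi]
        rw [Finset.sum_congr rfl key, Finset.sum_const, Finset.card_range]
        ring

lemma finsum2 (N : ℕ) (f : ℕ → ℕ → ℕ) :
    (∑ i : Fin N, ∑ j : Fin N, f i.val j.val) = ∑ i ∈ range N, ∑ j ∈ range N, f i j := by
  rw [Fin.sum_univ_eq_sum_range (fun a => ∑ j : Fin N, f a j.val)]
  exact Finset.sum_congr rfl fun i _ => Fin.sum_univ_eq_sum_range _ N

lemma key (n : ℕ) (hn : 2 ≤ n) :
    (∑ x : MV n, ∑ y : MV n, D n x y) + 2*n = 12*n^2 + 22 := by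
  have e1 := S3_closed n hn
  have e2 := S4_closed n hn
  have e3 := sumUU (n+1)
  have e4 := sumVU (n+1)
  have hsplit : (∑ x : MV n, ∑ y : MV n, D n x y)
      = S 4 (n+1) + 2*(S 3 (n+1) + 2*(n+1))
        + (∑ i ∈ range (n+1), ∑ j ∈ range (n+1), if i = j then 0 else 2)
        + 6*(n+1) := by
    simp only [Fintype.sum_sum_type, Finset.univ_unique, Finset.sum_singleton]
    simp only [D, Fin.ext_iff]
    simp only [Finset.sum_add_distrib]
    rw [finsum2 (n+1) (fun a b => min (Nat.dist a b) 4),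
        finsum2 (n+1) (fun a b => if a = b then 2 else min (Nat.dist a b) 3),
        finsum2 (n+1) (fun a b => if a = b then 0 else 2)]
    simp only [Finset.sum_const, Finset.card_univ, Fintype.card_fin, smul_eq_mul]
    rw [e4]
    unfold S
    ring
  rw [hsplit]
  have h5 : 2*(n+1)*(n+1) = 2*n^2 + 4*n + 2 := by ring
  linarith [e1, e2, e3, h5]

/-- For `n ≥ 2`, the Wiener index of the Mycielskian of the path `P_n`
(on `n+1` vertices) is `W(μ(P_n)) = 6n² - n + 11`. -/
theorem stmt_14 (n : ℕ) (hn : 2 ≤ n) :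
    wiener (mycielskian (SimpleGraph.pathGraph (n + 1))) =
      6 * (n : ℚ) ^ 2 - n + 11 := by
  have hn1 : 1 ≤ n := by omega
  have hw : wiener (mycielskian (SimpleGraph.pathGraph (n + 1)))
      = ((∑ x : MV n, ∑ y : MV n, D n x y : ℕ) : ℚ) / 2 := by
    unfold wiener
    congr 1
    push_cast
    exact Finset.sum_congr rfl fun x _ => Finset.sum_congr rfl fun y _ => by
      rw [dist_eq hn1]
  rw [hw]
  have hk := key n hn
  have : ((∑ x : MV n, ∑ y : MV n, D n x y : ℕ) : ℚ) + 2*n = 12*(n:ℚ)^2 + 22 := by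
    exact_mod_cast congrArg (Nat.cast : ℕ → ℚ) hk
  linarith
end

section
/- Let G be a simple connected graph with n ≥ 2 vertices and m edges, and write a_k = d(G,k). Then the closeness of the Mycielskian of G is C(μ(G)) = (1/16)(9n² + 23n + 38m + 14a_2 + 2a_3). -/
open SimpleGraph Polynomial Finset

/-!
Write `d` for distances in `G` and `d_μ` for those in `μ(G)`. Then `d_μ(w, u_i) = 1`,
`d_μ(u_i, u_j) = d_μ(w, v_i) = d_μ(u_i, v_i) = 2`, `d_μ(u_i, v_j) = min (d(v_i, v_j), 3)` for
`i ≠ j` and `d_μ(v_i, v_j) = min (d(v_i, v_j), 4)`. The upper bounds are explicit walks; for the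
lower bounds, a walk avoiding `w` folds onto a walk of `G` of the same length, while a walk
through `w` is at least as long as `d_μ(x, w) + d_μ(w, y)`. Each `2^{-d_μ}` is then a constant
plus multiples of the indicators of `d(v_i, v_j) = k` for `k ≤ 3`, and summing these gives `n²`,
`n` and the `a_k`, with `a_1 = m`.
-/

open Sum

namespace mycielskian

variable {V : Type*} {G : SimpleGraph V} {a b i j k : V}

@[simp]
lemma adj_orig_orig : (mycielskian G).Adj (inl a) (inl b) ↔ G.Adj a b := by
  simpa [mycielskian, G.adj_comm b a] using fun h : G.Adj a b => h.ne

@[simp]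
lemma adj_orig_shadow : (mycielskian G).Adj (inl a) (inr (inl b)) ↔ G.Adj a b := by
  simp [mycielskian]

@[simp]
lemma adj_shadow_orig : (mycielskian G).Adj (inr (inl a)) (inl b) ↔ G.Adj a b := by
  simp [mycielskian, G.adj_comm]

@[simp]
lemma adj_shadow_apex : (mycielskian G).Adj (inr (inl a)) (inr (inr ())) := by
  simp [mycielskian]

@[simp]
lemma adj_apex_shadow : (mycielskian G).Adj (inr (inr ())) (inr (inl a)) := by
  simp [mycielskian]

@[simp]
lemma not_adj_shadow_shadow : ¬ (mycielskian G).Adj (inr (inl a)) (inr (inl b)) := by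
  simp [mycielskian]

@[simp]
lemma not_adj_orig_apex : ¬ (mycielskian G).Adj (inl a) (inr (inr ())) := by
  simp [mycielskian]

@[simp]
lemma not_adj_apex_orig : ¬ (mycielskian G).Adj (inr (inr ())) (inl a) := by
  simp [mycielskian]

end mycielskian

namespace SimpleGraph

variable {W : Type*} {H : SimpleGraph W} {u v x : W}

lemma dist_eq_two_of_adj_of_adj (hux : H.Adj u x) (hxv : H.Adj x v) (hne : u ≠ v)
    (hnadj : ¬ H.Adj u v) : H.dist u v = 2 :=
  le_antisymm (by simpa using dist_le (hux.toWalk.concat hxv))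
    ((hux.reachable.trans hxv.reachable).one_lt_dist_of_ne_of_not_adj hne hnadj)

lemma Walk.dist_add_dist_le_length [DecidableEq W] (p : H.Walk u v) (hx : x ∈ p.support) :
    H.dist u x + H.dist x v ≤ p.length := by
  rw [← p.take_spec hx, Walk.length_append]
  exact add_le_add (dist_le _) (dist_le _)

lemma Reachable.exists_adj_of_ne (h : H.Reachable u v) (hne : u ≠ v) : ∃ x, H.Adj u x :=
  let ⟨p⟩ := h
  ⟨_, p.adj_snd (p.not_nil_of_ne hne)⟩

end SimpleGraph

namespace mycielskian

variable {V : Type*} {G : SimpleGraph V} {i j k : V}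

abbrev origHom : G →g mycielskian G := ⟨inl, adj_orig_orig.mpr⟩

lemma dist_orig_orig_le (h : G.Reachable i j) :
    (mycielskian G).dist (inl i) (inl j) ≤ G.dist i j := by
  obtain ⟨p, hp⟩ := h.exists_walk_length_eq_dist
  exact (dist_le (p.map origHom)).trans_eq (by simp [hp])

lemma dist_shadow_orig_le (h : G.Reachable i j) (hij : i ≠ j) :
    (mycielskian G).dist (inr (inl i)) (inl j) ≤ G.dist i j := by
  obtain ⟨p, hp⟩ := h.exists_walk_length_eq_dist
  cases p with
  | nil => exact absurd rfl hij
  | cons hadj q =>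
    exact (dist_le (.cons (adj_shadow_orig.mpr hadj) (q.map origHom))).trans_eq
      (by simp [← hp])

lemma reachable_orig_apex (hk : G.Adj i k) :
    (mycielskian G).Reachable (inl i) (inr (inr ())) :=
  (adj_orig_shadow.mpr hk).reachable.trans adj_shadow_apex.reachable

lemma dist_apex_shadow : (mycielskian G).dist (inr (inr ())) (inr (inl i)) = 1 :=
  dist_eq_one_iff_adj.mpr adj_apex_shadow

lemma dist_shadow_shadow (hij : i ≠ j) :
    (mycielskian G).dist (inr (inl i)) (inr (inl j)) = 2 :=
  dist_eq_two_of_adj_of_adj adj_shadow_apex adj_apex_shadow (by simpa using hij)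
    not_adj_shadow_shadow

lemma dist_apex_orig (hk : G.Adj i k) : (mycielskian G).dist (inr (inr ())) (inl i) = 2 :=
  dist_eq_two_of_adj_of_adj adj_apex_shadow (adj_shadow_orig.mpr hk.symm) (by simp)
    not_adj_apex_orig

lemma dist_shadow_orig_self (hk : G.Adj i k) : (mycielskian G).dist (inr (inl i)) (inl i) = 2 :=
  dist_eq_two_of_adj_of_adj (adj_shadow_orig.mpr hk) (adj_orig_orig.mpr hk.symm) (by simp)
    (by simp)

-- Folds `μ(G)` minus its apex onto `G`; the value `v₀` at the apex is never used.
def proj (v₀ : V) : V ⊕ V ⊕ Unit → V :=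
  Sum.elim id (Sum.elim id fun _ => v₀)

lemma adj_proj (v₀ : V) {x y : V ⊕ V ⊕ Unit} (h : (mycielskian G).Adj x y)
    (hx : x ≠ inr (inr ())) (hy : y ≠ inr (inr ())) : G.Adj (proj v₀ x) (proj v₀ y) := by
  rcases x with a | a | ⟨⟩ <;> rcases y with b | b | ⟨⟩ <;> simp_all [proj]

lemma exists_walk_proj (v₀ : V) {x y : V ⊕ V ⊕ Unit} (p : (mycielskian G).Walk x y)
    (hp : inr (inr ()) ∉ p.support) :
    ∃ q : G.Walk (proj v₀ x) (proj v₀ y), q.length = p.length := by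
  induction p with
  | nil => exact ⟨.nil, rfl⟩
  | cons hadj p ih =>
    rw [Walk.support_cons, List.mem_cons, not_or] at hp
    obtain ⟨q, hq⟩ := ih hp.2
    exact ⟨.cons (adj_proj v₀ hadj (Ne.symm hp.1) fun h => hp.2 (h ▸ p.start_mem_support)) q,
      by simp [hq]⟩

lemma min_dist_proj_le_dist (v₀ : V) {x y : V ⊕ V ⊕ Unit}
    (h : (mycielskian G).Reachable x y) :
    min (G.dist (proj v₀ x) (proj v₀ y))
      ((mycielskian G).dist x (inr (inr ())) + (mycielskian G).dist (inr (inr ())) y)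
      ≤ (mycielskian G).dist x y := by
  classical
  obtain ⟨p, hp⟩ := h.exists_walk_length_eq_dist
  rw [← hp]
  by_cases hw : inr (inr ()) ∈ p.support
  · exact min_le_of_right_le (p.dist_add_dist_le_length hw)
  · obtain ⟨q, hq⟩ := exists_walk_proj v₀ p hw
    exact min_le_of_left_le (hq ▸ dist_le q)

lemma dist_shadow_orig (h : G.Reachable i j) (hij : i ≠ j) :
    (mycielskian G).dist (inr (inl i)) (inl j) = min (G.dist i j) 3 := by
  obtain ⟨k, hk⟩ := h.symm.exists_adj_of_ne hij.symm
  have hthree : (mycielskian G).dist (inr (inl i)) (inl j) ≤ 3 := by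
    simpa using dist_le (adj_shadow_apex.toWalk.concat adj_apex_shadow |>.concat
      (adj_shadow_orig.mpr hk.symm))
  have hlow := min_dist_proj_le_dist i
    ((adj_shadow_apex (a := i)).reachable.trans (reachable_orig_apex hk).symm)
  rw [dist_comm (u := inr (inl i)), dist_apex_shadow, dist_apex_orig hk] at hlow
  have := dist_shadow_orig_le h hij
  simp only [proj, Sum.elim_inl, Sum.elim_inr, id] at hlow
  omega

lemma dist_orig_orig (h : G.Reachable i j) :
    (mycielskian G).dist (inl i) (inl j) = min (G.dist i j) 4 := by
  rcases eq_or_ne i j with rfl | hij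
  · simp
  obtain ⟨k, hk⟩ := h.exists_adj_of_ne hij
  obtain ⟨l, hl⟩ := h.symm.exists_adj_of_ne hij.symm
  have hfour : (mycielskian G).dist (inl i) (inl j) ≤ 4 := by
    simpa using dist_le ((adj_orig_shadow.mpr hk).toWalk.concat adj_shadow_apex
      |>.concat adj_apex_shadow |>.concat (adj_shadow_orig.mpr hl.symm))
  have hlow := min_dist_proj_le_dist i
    ((reachable_orig_apex hk).trans (reachable_orig_apex hl).symm)
  rw [dist_comm (u := inl i), dist_apex_orig hk, dist_apex_orig hl] at hlow
  have := dist_orig_orig_le h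
  simp only [proj, Sum.elim_inl, id] at hlow
  omega

end mycielskian

lemma closeness_eq_sum_sub_card {V : Type*} [Fintype V] (H : SimpleGraph V) :
    closeness H = ∑ u, ∑ v, (1 / 2 : ℚ) ^ H.dist u v - Fintype.card V := by
  classical
  have hrow (u : V) : ∑ v, (if v = u then 0 else (1 / 2 : ℚ) ^ H.dist u v)
      = ∑ v, (1 / 2 : ℚ) ^ H.dist u v - 1 := by
    rw [← sum_erase_add _ _ (mem_univ u), ← sum_erase_add _ _ (mem_univ u),
      sum_congr rfl fun v hv => if_neg (ne_of_mem_erase hv)]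
    simp
  rw [closeness, Finset.sum_congr rfl fun u _ => hrow u, Finset.sum_sub_distrib]
  simp

lemma distCount_one {V : Type*} (G : SimpleGraph V) : distCount G 1 = Nat.card G.edgeSet :=
  Nat.card_congr <| Equiv.subtypeEquivRight fun e => by
    induction e using Sym2.ind with
    | _ a b => simpa using fun h : G.Adj a b => h.ne

lemma card_filter_dist_eq {V : Type*} [Fintype V] (G : SimpleGraph V) {k : ℕ} (hk : k ≠ 0) :
    #{p : V × V | G.dist p.1 p.2 = k} = 2 * distCount G k := by
  classical
  set T := ({e : Sym2 V | ¬ e.IsDiag ∧ Sym2.lift ⟨G.dist, fun _ _ => G.dist_comm⟩ e = k} :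
    Finset (Sym2 V))
  have hT : distCount G k = #T := by
    rw [distCount, Nat.card_eq_fintype_card, Fintype.card_subtype]
  have hmaps : ∀ p ∈ ({p : V × V | G.dist p.1 p.2 = k} : Finset _), s(p.1, p.2) ∈ T := by
    rintro ⟨a, b⟩ hp
    simp only [mem_filter, mem_univ, true_and] at hp
    have hab : a ≠ b := by rintro rfl; simp [eq_comm, hk] at hp
    simpa [T, hab] using hp
  rw [hT, card_eq_sum_card_fiberwise hmaps, mul_comm, ← smul_eq_mul, ← sum_const]
  refine sum_congr rfl fun e he => ?_
  induction e using Sym2.ind with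
  | _ a b =>
    simp only [T, mem_filter, mem_univ, true_and, Sym2.mk_isDiag_iff, Sym2.lift_mk] at he
    obtain ⟨hab, hd⟩ := he
    rw [card_eq_two]
    refine ⟨(a, b), (b, a), by simp [hab], ?_⟩
    ext ⟨x, y⟩
    simp only [mem_filter, mem_univ, true_and, Sym2.eq_iff, mem_insert, mem_singleton,
      Prod.mk.injEq]
    constructor
    · exact fun h => h.2
    · rintro (⟨rfl, rfl⟩ | ⟨rfl, rfl⟩)
      · exact ⟨hd, .inl ⟨rfl, rfl⟩⟩
      · exact ⟨G.dist_comm ▸ hd, .inr ⟨rfl, rfl⟩⟩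

section sums

variable {V : Type*} [Fintype V] {G : SimpleGraph V}

lemma sum_sum_ite_dist_eq {k : ℕ} (hk : k ≠ 0) (c : ℚ) :
    ∑ i, ∑ j, (if G.dist i j = k then c else 0) = 2 * distCount G k * c := by
  rw [← Fintype.sum_prod_type' (f := fun i j => if G.dist i j = k then c else 0),
    ← sum_filter, sum_const, card_filter_dist_eq G hk, nsmul_eq_mul]
  push_cast
  ring

lemma sum_sum_ite_dist_eq_zero (hG : G.Preconnected) (c : ℚ) :
    ∑ i, ∑ j, (if G.dist i j = 0 then c else 0) = Fintype.card V * c := by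
  classical
  simp [(hG _ _).dist_eq_zero_iff]

end sums

lemma half_pow_min_four (d : ℕ) :
    (1 / 2 : ℚ) ^ min d 4 = 1 / 16 + (if d = 0 then 15 / 16 else 0)
      + (if d = 1 then 7 / 16 else 0) + (if d = 2 then 3 / 16 else 0)
      + (if d = 3 then 1 / 16 else 0) := by
  rcases lt_or_ge d 4 with h | h
  · interval_cases d <;> norm_num
  · norm_num [min_eq_right h, show d ≠ 0 by omega, show d ≠ 1 by omega, show d ≠ 2 by omega,
      show d ≠ 3 by omega]

lemma half_pow_min_three {d : ℕ} (hd : d ≠ 0) :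
    (1 / 2 : ℚ) ^ min d 3 = 1 / 8 + (if d = 1 then 3 / 8 else 0)
      + (if d = 2 then 1 / 8 else 0) := by
  rcases lt_or_ge d 3 with h | h
  · have := Nat.pos_of_ne_zero hd
    interval_cases d <;> norm_num
  · norm_num [min_eq_right h, show d ≠ 1 by omega, show d ≠ 2 by omega]

namespace mycielskian

variable {V : Type*} {G : SimpleGraph V}

lemma half_pow_dist_shadow_orig [Nontrivial V] (hG : G.Preconnected) (i j : V) :
    (1 / 2 : ℚ) ^ (mycielskian G).dist (inr (inl i)) (inl j)
      = 1 / 8 + (if G.dist i j = 0 then 1 / 8 else 0) + (if G.dist i j = 1 then 3 / 8 else 0)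
        + (if G.dist i j = 2 then 1 / 8 else 0) := by
  rcases eq_or_ne i j with rfl | hij
  · obtain ⟨k, hk⟩ := hG.exists_adj_of_nontrivial i
    rw [dist_shadow_orig_self hk]
    norm_num
  · have hd : G.dist i j ≠ 0 := ((hG i j).pos_dist_of_ne hij).ne'
    rw [dist_shadow_orig (hG i j) hij, half_pow_min_three hd, if_neg hd]
    ring

lemma half_pow_dist_shadow_shadow (hG : G.Preconnected) (i j : V) :
    (1 / 2 : ℚ) ^ (mycielskian G).dist (inr (inl i)) (inr (inl j))
      = 1 / 4 + (if G.dist i j = 0 then 3 / 4 else 0) := by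
  rcases eq_or_ne i j with rfl | hij
  · norm_num
  · rw [dist_shadow_shadow hij, if_neg ((hG i j).pos_dist_of_ne hij).ne']
    norm_num

variable [Fintype V]

lemma sum_half_pow_dist_orig_orig (hG : G.Preconnected) :
    ∑ i, ∑ j, (1 / 2 : ℚ) ^ (mycielskian G).dist (inl i) (inl j)
      = (Fintype.card V ^ 2 + 15 * Fintype.card V + 14 * distCount G 1 + 6 * distCount G 2
        + 2 * distCount G 3) / 16 := by
  simp only [dist_orig_orig (hG _ _), half_pow_min_four, sum_add_distrib]
  rw [sum_sum_ite_dist_eq_zero hG, sum_sum_ite_dist_eq one_ne_zero,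
    sum_sum_ite_dist_eq two_ne_zero, sum_sum_ite_dist_eq three_ne_zero]
  simp
  ring

lemma sum_half_pow_dist_shadow_orig [Nontrivial V] (hG : G.Preconnected) :
    ∑ i, ∑ j, (1 / 2 : ℚ) ^ (mycielskian G).dist (inr (inl i)) (inl j)
      = (Fintype.card V ^ 2 + Fintype.card V + 6 * distCount G 1 + 2 * distCount G 2) / 8 := by
  simp only [half_pow_dist_shadow_orig hG, sum_add_distrib]
  rw [sum_sum_ite_dist_eq_zero hG, sum_sum_ite_dist_eq one_ne_zero,
    sum_sum_ite_dist_eq two_ne_zero]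
  simp
  ring

lemma sum_half_pow_dist_orig_shadow [Nontrivial V] (hG : G.Preconnected) :
    ∑ i, ∑ j, (1 / 2 : ℚ) ^ (mycielskian G).dist (inl i) (inr (inl j))
      = (Fintype.card V ^ 2 + Fintype.card V + 6 * distCount G 1 + 2 * distCount G 2) / 8 := by
  rw [sum_comm, ← sum_half_pow_dist_shadow_orig hG]
  simp only [dist_comm]

lemma sum_half_pow_dist_shadow_shadow (hG : G.Preconnected) :
    ∑ i, ∑ j, (1 / 2 : ℚ) ^ (mycielskian G).dist (inr (inl i)) (inr (inl j))
      = (Fintype.card V ^ 2 + 3 * Fintype.card V) / 4 := by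
  simp only [half_pow_dist_shadow_shadow hG, sum_add_distrib]
  rw [sum_sum_ite_dist_eq_zero hG]
  simp
  ring

lemma sum_half_pow_dist_apex_orig [Nontrivial V] (hG : G.Preconnected) :
    ∑ i, (1 / 2 : ℚ) ^ (mycielskian G).dist (inr (inr ())) (inl i) = Fintype.card V / 4 := by
  have hrow (i : V) : (mycielskian G).dist (inr (inr ())) (inl i) = 2 :=
    dist_apex_orig (hG.exists_adj_of_nontrivial i).choose_spec
  norm_num [hrow, div_eq_mul_inv]

lemma sum_half_pow_dist_apex_shadow :
    ∑ i, (1 / 2 : ℚ) ^ (mycielskian G).dist (inr (inr ())) (inr (inl i))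
      = Fintype.card V / 2 := by
  simp [dist_apex_shadow, div_eq_mul_inv]

end mycielskian

/-- For a connected graph `G` with `n ≥ 2` vertices and `m` edges, with
`a_k = d(G,k)`, the closeness of `μ(G)` is `(1/16)(9n² + 23n + 38m + 14a₂ + 2a₃)`. -/
theorem stmt_15 {V : Type*} [Fintype V] (G : SimpleGraph V) (n m : ℕ)
    (hn : Fintype.card V = n) (hn2 : 2 ≤ n) (hm : Nat.card G.edgeSet = m)
    (hc : G.Connected) :
    closeness (mycielskian G) =
      (9 * (n : ℚ) ^ 2 + 23 * n + 38 * m + 14 * distCount G 2 + 2 * distCount G 3) / 16 := by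
  subst hn hm
  have : Nontrivial V := Fintype.one_lt_card_iff_nontrivial.mp hn2
  have hG := hc.preconnected
  rw [closeness_eq_sum_sub_card]
  simp only [Fintype.sum_sum_type, Fintype.sum_unique, PUnit.default_eq_unit, sum_add_distrib]
  simp only [dist_comm (v := (inr (inr ()) : V ⊕ V ⊕ Unit))]
  rw [mycielskian.sum_half_pow_dist_orig_orig hG, mycielskian.sum_half_pow_dist_orig_shadow hG,
    mycielskian.sum_half_pow_dist_shadow_orig hG, mycielskian.sum_half_pow_dist_shadow_shadow hG,
    mycielskian.sum_half_pow_dist_apex_orig hG, mycielskian.sum_half_pow_dist_apex_shadow,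
    ← distCount_one]
  simp
  ring
end

section
/- For every integer n ≥ 2, the Mycielskian of the star S_n satisfies C(μ(S_n)) = (16n² + 72n + 32)/16 and B⁻(μ(S_n)) = (2n² + n + 2)/(2n + 3). -/
open SimpleGraph Polynomial Finset

/-!
The centre of the star is a universal vertex, and in the Mycielskian of any graph with a
universal vertex and at least two vertices, any two distinct non-adjacent vertices have a common
neighbour; so `μ(S_n)` has diameter `2`. In a graph of diameter at most `2` an edge contributes
`1/2` to the closeness and a non-edge `1/4`, so `C(G) = |E| + |Ē|/2`. A non-edge `uv` has
distance `2`, its shortest paths `u x v` correspond to the common neighbours `x`, and each has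
exactly one interior vertex, so `Σ_w σ_uv(w)/σ_uv = 1`; edges contribute nothing, whence
`Σ_w B_w = |Ē|`. Finally `μ(S_n)` has `2n + 3` vertices and `3n + (n + 1) = 4n + 1` edges, so
`|Ē| = (2n + 3)(n + 1) - (4n + 1) = 2n² + n + 2`.
-/

namespace SimpleGraph

variable {V : Type*} {G : SimpleGraph V}

section Counting

variable [Fintype V] [DecidableRel G.Adj]

theorem sum_sum_ite_adj {R : Type*} [Semiring R] :
    ∑ u, ∑ v, (if G.Adj u v then (1 : R) else 0) = 2 * #G.edgeFinset := by
  rw [← Nat.cast_ofNat, ← Nat.cast_mul, ← sum_degrees_eq_twice_card_edges]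
  simp only [Nat.cast_sum, sum_boole, ← card_neighborFinset_eq_degree, neighborFinset_eq_filter]

theorem card_edgeFinset_add_card_edgeFinset_compl [DecidableEq V] :
    #G.edgeFinset + #Gᶜ.edgeFinset = (Fintype.card V).choose 2 := by
  rw [← card_edgeFinset_top_eq_card_choose_two, ← card_union_of_disjoint
    (disjoint_edgeFinset.mpr disjoint_compl_right), ← edgeFinset_sup]
  congr 1
  ext e
  simp only [mem_edgeFinset, sup_compl_eq_top]

end Counting

theorem ediam_le_two_iff : G.ediam ≤ 2 ↔
    ∀ u v, u ≠ v → ¬G.Adj u v → (G.commonNeighbors u v).Nonempty := by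
  refine ⟨fun h u v huv hadj => Set.nonempty_iff_ne_empty.mpr fun he =>
    (ediam_le_iff.mp h u v).not_gt (two_lt_edist_iff.mpr ⟨huv, hadj, he⟩), fun h => ?_⟩
  refine ediam_le_iff.mpr fun u v => not_lt.mp fun hlt => ?_
  obtain ⟨huv, hadj, he⟩ := two_lt_edist_iff.mp hlt
  exact (h u v huv hadj).ne_empty he

theorem dist_eq_two_of_ediam_le_two (h : G.ediam ≤ 2) {u v : V} (huv : u ≠ v)
    (hadj : ¬G.Adj u v) : G.dist u v = 2 := by
  rw [dist, edist_eq_two_iff.mpr ⟨huv, hadj, ediam_le_two_iff.mp h u v huv hadj⟩]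
  rfl

theorem closeness_eq_of_ediam_le_two [Fintype V] [DecidableEq V] [DecidableRel G.Adj]
    (h : G.ediam ≤ 2) : closeness G = #G.edgeFinset + #Gᶜ.edgeFinset / 2 := by
  calc closeness G = ∑ u, ∑ v, ((if G.Adj u v then (1 : ℚ) else 0) / 2
        + (if Gᶜ.Adj u v then (1 : ℚ) else 0) / 4) := by
        simp only [closeness]
        refine sum_congr rfl fun u _ => sum_congr rfl fun v _ => ?_
        by_cases huv : u = v
        · simp [huv]
        by_cases hadj : G.Adj u v
        · simp [huv, Ne.symm huv, hadj, dist_eq_one_iff_adj.mpr hadj]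
        · simp [huv, Ne.symm huv, hadj, dist_eq_two_of_ediam_le_two h huv hadj]
          norm_num
    _ = #G.edgeFinset + #Gᶜ.edgeFinset / 2 := by
        simp only [sum_add_distrib, ← sum_div, sum_sum_ite_adj]
        ring

namespace Walk

theorem support_eq_of_length_eq_one {u v : V} {p : G.Walk u v} (hp : p.length = 1) :
    p.support = [u, v] := by
  match p, hp with
  | .cons _ .nil, _ => rfl

theorem mem_support_iff_of_length_eq_two {u v w : V} {p : G.Walk u v} (hp : p.length = 2) :
    w ∈ p.support ↔ w = u ∨ w = p.snd ∨ w = v := by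
  match p, hp with
  | .cons _ (.cons _ .nil), _ => simp

end Walk

theorem numSPthrough_eq_zero_of_adj {u v w : V} (hadj : G.Adj u v) (hu : w ≠ u) (hv : w ≠ v) :
    numSPthrough G w u v = 0 := by
  rw [numSPthrough, dist_eq_one_iff_adj.mpr hadj, Nat.card_eq_zero]
  exact .inl ⟨fun ⟨p, hp, hw⟩ => by simp [Walk.support_eq_of_length_eq_one hp, hu, hv] at hw⟩

section ShortestPaths

variable [DecidableRel G.Adj] {u v : V}

theorem numSP_eq_card_filter [Fintype V] (hd : G.dist u v = 2) :
    numSP G u v = #{w | G.Adj u w ∧ G.Adj w v} := by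
  rw [numSP, hd, Nat.card_congr (G.walkLengthTwoEquivCommonNeighbors u v),
    ← Fintype.card_subtype, ← Nat.card_eq_fintype_card]
  exact Nat.card_congr
    (Equiv.subtypeEquivRight fun w => by simp [mem_commonNeighbors, G.adj_comm v w])

theorem numSPthrough_eq_ite {w : V} (hd : G.dist u v = 2) (hu : w ≠ u) (hv : w ≠ v) :
    numSPthrough G w u v = if G.Adj u w ∧ G.Adj w v then 1 else 0 := by
  have e : {p : G.Walk u v // p.length = 2 ∧ w ∈ p.support} ≃
      {x : G.commonNeighbors u v // x.1 = w} :=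
    (Equiv.subtypeSubtypeEquivSubtypeInter _ _).symm.trans
      (Equiv.subtypeEquiv (G.walkLengthTwoEquivCommonNeighbors u v) fun p => by
        simp [Walk.mem_support_iff_of_length_eq_two p.2, hu, hv, eq_comm])
  rw [numSPthrough, hd, Nat.card_congr e]
  split_ifs with hw
  · exact Nat.card_eq_one_iff_exists.mpr
      ⟨⟨⟨w, G.mem_commonNeighbors.mpr ⟨hw.1, hw.2.symm⟩⟩, rfl⟩,
        fun x => Subtype.ext (Subtype.ext x.2)⟩
  · have : IsEmpty {x : G.commonNeighbors u v // x.1 = w} :=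
      ⟨fun ⟨⟨x, hx⟩, hxw⟩ => hw (hxw ▸ by simpa [mem_commonNeighbors, G.adj_comm v x] using hx)⟩
    exact Nat.card_of_isEmpty

theorem sum_ite_numSPthrough_div_numSP [Fintype V] [DecidableEq V] (h : G.ediam ≤ 2)
    (u v : V) :
    ∑ w, (if u ≠ v ∧ u ≠ w ∧ v ≠ w then (numSPthrough G w u v : ℚ) / numSP G u v else 0) =
      if Gᶜ.Adj u v then 1 else 0 := by
  by_cases huv : u = v
  · simp [huv]
  by_cases hadj : G.Adj u v
  · refine (sum_eq_zero fun w _ => ?_).trans (by simp [hadj])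
    split_ifs with hw
    · simp [numSPthrough_eq_zero_of_adj hadj (Ne.symm hw.2.1) (Ne.symm hw.2.2)]
    · rfl
  have hd := dist_eq_two_of_ediam_le_two h huv hadj
  have hpos : (#{w | G.Adj u w ∧ G.Adj w v} : ℚ) ≠ 0 := by
    obtain ⟨x, hx⟩ := ediam_le_two_iff.mp h u v huv hadj
    rw [mem_commonNeighbors] at hx
    exact_mod_cast (card_pos.mpr ⟨x, by simp [hx.1, hx.2.symm]⟩).ne'
  calc _ = ∑ w, (if G.Adj u w ∧ G.Adj w v then (1 : ℚ) else 0) /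
        #{w | G.Adj u w ∧ G.Adj w v} := by
        refine sum_congr rfl fun w _ => ?_
        by_cases hw : u ≠ w ∧ v ≠ w
        · simp [huv, hw, numSPthrough_eq_ite hd (Ne.symm hw.1) (Ne.symm hw.2),
            numSP_eq_card_filter hd]
        · obtain rfl | rfl : w = u ∨ w = v := by tauto
          all_goals simp
    _ = if Gᶜ.Adj u v then 1 else 0 := by
        rw [← sum_div, sum_boole, div_self hpos]
        simp [huv, hadj]

end ShortestPaths

theorem sum_btwVertex_eq_of_ediam_le_two [Fintype V] [DecidableEq V] [DecidableRel G.Adj]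
    (h : G.ediam ≤ 2) : ∑ w, btwVertex G w = #Gᶜ.edgeFinset := by
  simp only [btwVertex, ← sum_div]
  rw [sum_comm]
  calc _ = (∑ u, ∑ v, if Gᶜ.Adj u v then (1 : ℚ) else 0) / 2 := by
        congr 1
        refine sum_congr rfl fun u _ => ?_
        rw [sum_comm]
        refine sum_congr rfl fun v _ => ?_
        convert sum_ite_numSPthrough_div_numSP h u v
    _ = #Gᶜ.edgeFinset := by
        rw [sum_sum_ite_adj]
        ring

end SimpleGraph

section Mycielskian

variable {V : Type*} (G : SimpleGraph V) {a b : V} {x y : Unit}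

@[simp] theorem mycielskian_adj_inl_inl : (mycielskian G).Adj (.inl a) (.inl b) ↔ G.Adj a b := by
  simpa [mycielskian, G.adj_comm b a] using G.ne_of_adj

@[simp] theorem mycielskian_adj_inl_inr_inl :
    (mycielskian G).Adj (.inl a) (.inr (.inl b)) ↔ G.Adj a b := by
  simp [mycielskian]

@[simp] theorem mycielskian_adj_inr_inl_inl :
    (mycielskian G).Adj (.inr (.inl a)) (.inl b) ↔ G.Adj a b := by
  simp [mycielskian, G.adj_comm b a]

@[simp] theorem mycielskian_adj_inr_inl_inr_inl :
    ¬(mycielskian G).Adj (.inr (.inl a)) (.inr (.inl b)) := by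
  simp [mycielskian]

@[simp] theorem mycielskian_adj_inr_inl_inr_inr :
    (mycielskian G).Adj (.inr (.inl a)) (.inr (.inr x)) := by
  simp [mycielskian]

@[simp] theorem mycielskian_adj_inr_inr_inr_inl :
    (mycielskian G).Adj (.inr (.inr x)) (.inr (.inl a)) := by
  simp [mycielskian]

@[simp] theorem mycielskian_adj_inl_inr_inr : ¬(mycielskian G).Adj (.inl a) (.inr (.inr x)) := by
  simp [mycielskian]

@[simp] theorem mycielskian_adj_inr_inr_inl : ¬(mycielskian G).Adj (.inr (.inr x)) (.inl a) := by
  simp [mycielskian]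

@[simp] theorem mycielskian_adj_inr_inr_inr_inr :
    ¬(mycielskian G).Adj (.inr (.inr x)) (.inr (.inr y)) := by
  simp [mycielskian]

theorem card_edgeFinset_mycielskian [Fintype V] [DecidableEq V] [DecidableRel G.Adj]
    [DecidableRel (mycielskian G).Adj] :
    #(mycielskian G).edgeFinset = 3 * #G.edgeFinset + Fintype.card V := by
  have h := (mycielskian G).sum_sum_ite_adj (R := ℕ)
  simp only [Fintype.sum_sum_type, Fintype.sum_unique, mycielskian_adj_inl_inl,
    mycielskian_adj_inl_inr_inl, mycielskian_adj_inr_inl_inl, mycielskian_adj_inr_inl_inr_inl,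
    mycielskian_adj_inr_inl_inr_inr, mycielskian_adj_inr_inr_inr_inl, mycielskian_adj_inl_inr_inr,
    mycielskian_adj_inr_inr_inl, mycielskian_adj_inr_inr_inr_inr, if_true, if_false,
    sum_const_zero, sum_const, card_univ, smul_eq_mul, mul_one, add_zero, zero_add,
    sum_add_distrib, G.sum_sum_ite_adj, Nat.cast_id, Fintype.card_unit, one_mul] at h
  omega

theorem ediam_mycielskian_le_two [Nontrivial V] {c : V} (hc : G.IsUniversal c) :
    (mycielskian G).ediam ≤ 2 := by
  obtain ⟨d, hd⟩ := exists_ne c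
  have adj_c : ∀ v, G.Adj v c ↔ v ≠ c := fun v => ⟨fun h => h.ne, fun hv => (hc hv.symm).symm⟩
  have of_inl : ∀ a y, .inl a ≠ y → ¬(mycielskian G).Adj (.inl a) y →
      ((mycielskian G).commonNeighbors (.inl a) y).Nonempty := by
    rintro a (b | b | ⟨⟩) hab hadj
    · have ha : a ≠ c := by rintro rfl; exact hadj (by simpa using hc (by simpa using hab))
      have hb : b ≠ c := by rintro rfl; exact hadj (by simpa using (hc ha.symm).symm)
      exact ⟨.inl c, by simp [mem_commonNeighbors, adj_c, ha, hb]⟩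
    · by_cases ha : a = c
      · have hb : b = c := by
          by_contra hb; exact hadj (by simpa [ha] using hc (Ne.symm hb))
        exact ⟨.inl d, by simp [mem_commonNeighbors, ha, hb, hc hd.symm]⟩
      · have hb : b ≠ c := by rintro rfl; exact hadj (by simpa [adj_c])
        exact ⟨.inl c, by simp [mem_commonNeighbors, adj_c, ha, hb]⟩
    · by_cases ha : a = c
      · exact ⟨.inr (.inl d), by simp [mem_commonNeighbors, ha, hc hd.symm]⟩
      · exact ⟨.inr (.inl c), by simp [mem_commonNeighbors, adj_c, ha]⟩
  refine ediam_le_two_iff.mpr ?_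
  rintro (a | a | ⟨⟩) y hxy hadj
  · exact of_inl a y hxy hadj
  all_goals rcases y with b | b | ⟨⟩
  · exact commonNeighbors_symm .. ▸ of_inl b _ hxy.symm fun h => hadj h.symm
  · exact ⟨.inr (.inr ()), by simp [mem_commonNeighbors]⟩
  · simp at hadj
  · exact commonNeighbors_symm .. ▸ of_inl b _ hxy.symm fun h => hadj h.symm
  · simp at hadj
  · simp at hxy

end Mycielskian

theorem starGraph_eq_starGraph_zero (n : ℕ) : _root_.starGraph n = SimpleGraph.starGraph 0 := rfl

/-- For `n ≥ 2`, the Mycielskian of the star `S_n` satisfies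
`C(μ(S_n)) = (16n² + 72n + 32)/16` and `B⁻(μ(S_n)) = (2n² + n + 2)/(2n+3)`. -/
theorem stmt_18 (n : ℕ) (hn : 2 ≤ n) :
    closeness (mycielskian (_root_.starGraph n)) =
      (16 * (n : ℚ) ^ 2 + 72 * n + 32) / 16 ∧
    btw (mycielskian (_root_.starGraph n)) =
      (2 * (n : ℚ) ^ 2 + n + 2) / (2 * n + 3) := by
  classical
  rw [starGraph_eq_starGraph_zero]
  have : Nontrivial (Fin (n + 1)) := Fin.nontrivial_iff_two_le.mpr (by omega)
  have hdiam := ediam_mycielskian_le_two _ (isUniversal_starGraph_self (r := (0 : Fin (n + 1))))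
  have hN : Fintype.card (Fin (n + 1) ⊕ Fin (n + 1) ⊕ Unit) = 2 * n + 3 := by
    simp only [Fintype.card_sum, Fintype.card_fin, Fintype.card_unit]; ring
  have hE : #(mycielskian (SimpleGraph.starGraph (0 : Fin (n + 1)))).edgeFinset = 4 * n + 1 := by
    have := (isTree_starGraph (0 : Fin (n + 1))).card_edgeFinset
    rw [Fintype.card_fin] at this
    rw [card_edgeFinset_mycielskian, Fintype.card_fin]
    omega
  have hEc : (#(mycielskian (SimpleGraph.starGraph (0 : Fin (n + 1))))ᶜ.edgeFinset : ℚ) =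
      2 * n ^ 2 + n + 2 := by
    have h := congrArg (Nat.cast (R := ℚ)) (card_edgeFinset_add_card_edgeFinset_compl
      (G := mycielskian (SimpleGraph.starGraph (0 : Fin (n + 1)))))
    rw [Nat.cast_add, Nat.cast_choose_two, hN, hE] at h
    push_cast at h
    linarith
  refine ⟨?_, ?_⟩
  · rw [closeness_eq_of_ediam_le_two hdiam, hE, hEc]
    push_cast
    ring
  · rw [_root_.btw, sum_btwVertex_eq_of_ediam_le_two hdiam, hEc, hN]
    push_cast
    rfl
end
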